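/- Let 1 < p < Q where Q = m + 2k, let R > 0, and define f(z,σ) = ( R / N(z,σ) )^{(Q−p)/(p−1)} for (z,σ) ≠ (0,0), where N(z,σ) = (|z|⁴ + 16|σ|²)^{1/4}. Then at every point (z,σ) with z ≠ 0 one has Δ_{H,p} f(z,σ) = 0; moreover f = 1 on the gauge sphere {N = R}. -/

import Mathlib

open scoped BigOperators
open Matrix

noncomputable section

variable {m k : ℕ}

/-- The ambient point space ℝ^m × ℝ^k. -/
abbrev Pt (m k : ℕ) := EuclideanSpace ℝ (Fin m) × EuclideanSpace ℝ (Fin k)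

/-- H-type (Clifford) condition on the matrices J_ℓ : skew-symmetry and
    J_ℓ J_{ℓ'} + J_{ℓ'} J_ℓ = -2 δ_{ℓℓ'} Id. -/
def HType (J : Fin k → Matrix (Fin m) (Fin m) ℝ) : Prop :=
  (∀ ℓ, (J ℓ)ᵀ = -(J ℓ)) ∧
  ∀ ℓ ℓ', J ℓ * J ℓ' + J ℓ' * J ℓ =
    (if ℓ = ℓ' then (-2 : ℝ) else 0) • (1 : Matrix (Fin m) (Fin m) ℝ)

/-- Horizontal derivative X_i f(z,σ) = ∂_{z_i} f + (1/2) Σ_ℓ (J_ℓ z)_i ∂_{σ_ℓ} f. -/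
def XD (J : Fin k → Matrix (Fin m) (Fin m) ℝ) (f : Pt m k → ℝ) (i : Fin m) (x : Pt m k) : ℝ :=
  fderiv ℝ f x (EuclideanSpace.single i 1, 0)
    + (1/2) * ∑ ℓ : Fin k, (∑ j : Fin m, J ℓ i j * x.1 j) *
        fderiv ℝ f x (0, EuclideanSpace.single ℓ 1)

/-- Squared length of the horizontal gradient. -/
def hGradSq (J : Fin k → Matrix (Fin m) (Fin m) ℝ) (f : Pt m k → ℝ) (x : Pt m k) : ℝ :=
  ∑ i : Fin m, (XD J f i x) ^ 2

/-- Length of the horizontal gradient. -/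
def hGradNorm (J : Fin k → Matrix (Fin m) (Fin m) ℝ) (f : Pt m k → ℝ) (x : Pt m k) : ℝ :=
  Real.sqrt (hGradSq J f x)

/-- Horizontal Laplacian Δ_H f = Σ X_i(X_i f). -/
def hLap (J : Fin k → Matrix (Fin m) (Fin m) ℝ) (f : Pt m k → ℝ) (x : Pt m k) : ℝ :=
  ∑ i : Fin m, XD J (XD J f i) i x

/-- Horizontal ∞-Laplacian Δ_{H,∞} f = (1/2) Σ X_i(|∇_H f|²) X_i f. -/
def hInfLap (J : Fin k → Matrix (Fin m) (Fin m) ℝ) (f : Pt m k → ℝ) (x : Pt m k) : ℝ :=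
  (1/2) * ∑ i : Fin m, XD J (hGradSq J f) i x * XD J f i x

/-- Horizontal p-Laplacian Δ_{H,p} f = Σ X_i(|∇_H f|^{p-2} X_i f). -/
def hPLap (J : Fin k → Matrix (Fin m) (Fin m) ℝ) (p : ℝ) (f : Pt m k → ℝ) (x : Pt m k) : ℝ :=
  ∑ i : Fin m, XD J (fun y => (hGradSq J f y) ^ ((p - 2) / 2) * XD J f i y) i x

/-- Korányi gauge N(z,σ) = (|z|⁴ + 16|σ|²)^{1/4}. -/
def gaugeN (x : Pt m k) : ℝ := (‖x.1‖ ^ 4 + 16 * ‖x.2‖ ^ 2) ^ ((1 : ℝ)/4)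

/-- ∂_ξ g for g : ℝ × ℝ^k → ℝ. -/
def gXi (g : ℝ × EuclideanSpace ℝ (Fin k) → ℝ) (y : ℝ × EuclideanSpace ℝ (Fin k)) : ℝ :=
  fderiv ℝ g y (1, 0)

/-- ∂_{σ_ℓ} g for g : ℝ × ℝ^k → ℝ. -/
def gS (g : ℝ × EuclideanSpace ℝ (Fin k) → ℝ) (ℓ : Fin k) (y : ℝ × EuclideanSpace ℝ (Fin k)) : ℝ :=
  fderiv ℝ g y (0, EuclideanSpace.single ℓ 1)

/-- |∇ g|² = g_ξ² + |∇_σ g|². -/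
def gGradSq (g : ℝ × EuclideanSpace ℝ (Fin k) → ℝ) (y : ℝ × EuclideanSpace ℝ (Fin k)) : ℝ :=
  (gXi g y) ^ 2 + ∑ ℓ : Fin k, (gS g ℓ y) ^ 2

/-- g_{ξξ}. -/
def gXiXi (g : ℝ × EuclideanSpace ℝ (Fin k) → ℝ) (y : ℝ × EuclideanSpace ℝ (Fin k)) : ℝ :=
  fderiv ℝ (gXi g) y (1, 0)

/-- Δ_σ g. -/
def gLapS (g : ℝ × EuclideanSpace ℝ (Fin k) → ℝ) (y : ℝ × EuclideanSpace ℝ (Fin k)) : ℝ :=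
  ∑ ℓ : Fin k, fderiv ℝ (gS g ℓ) y (0, EuclideanSpace.single ℓ 1)

/-- Euclidean ∞-Laplacian Δ_∞ g = (1/2)⟨∇(|∇g|²), ∇g⟩ on ℝ × ℝ^k. -/
def gInf (g : ℝ × EuclideanSpace ℝ (Fin k) → ℝ) (y : ℝ × EuclideanSpace ℝ (Fin k)) : ℝ :=
  (1/2) * (fderiv ℝ (gGradSq g) y (1, 0) * gXi g y
    + ∑ ℓ : Fin k, fderiv ℝ (gGradSq g) y (0, EuclideanSpace.single ℓ 1) * gS g ℓ y)

/-!
Write `u = N⁴ = |z|⁴ + 16|σ|²` and `w = |z|²`. The H-type relations make the vectors `J_ℓ z`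
pairwise orthogonal of length `|z|`, which gives `|∇_H u|² = 16 w u`, `⟨∇_H w, ∇_H u⟩ = 8 w²`
and `Δ_H u = 4 (Q + 2) w`. For `f = c u^β` the flux `|∇_H f|^{p-2} ∇_H f` is a constant multiple
of `w^{(p-2)/2} u^{β(p-1)-p/2} ∇_H u`, and these three identities give its horizontal divergence
as `4cβ (16c²β²)^{(p-2)/2} (4β(p-1) + Q - p) w^{p/2} u^{β(p-1)-p/2}`. The capacitary potential is
`R^α u^β` with `α = (Q-p)/(p-1)` and `β = -α/4`, exactly the exponent for which this vanishes.
-/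

lemma mulVec_dotProduct_mulVec_of_transpose_eq_neg {n : Type*} [Fintype n] {A : Matrix n n ℝ}
    (hA : Aᵀ = -A) (B : Matrix n n ℝ) (z w : n → ℝ) :
    (A *ᵥ z) ⬝ᵥ (B *ᵥ w) = -(z ⬝ᵥ ((A * B) *ᵥ w)) := by
  rw [dotProduct_comm, ← dotProduct_transpose_mulVec, hA, neg_mulVec, dotProduct_neg,
    mulVec_mulVec]

lemma dotProduct_mulVec_self_of_transpose_eq_neg {n : Type*} [Fintype n] [DecidableEq n]
    {A : Matrix n n ℝ} (hA : Aᵀ = -A) (z : n → ℝ) : z ⬝ᵥ (A *ᵥ z) = 0 := by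
  have h := mulVec_dotProduct_mulVec_of_transpose_eq_neg hA 1 z z
  rw [one_mulVec, mul_one, dotProduct_comm] at h
  linarith

lemma EuclideanSpace.norm_sq_eq_dotProduct {n : Type*} [Fintype n] (v : EuclideanSpace ℝ n) :
    ‖v‖ ^ 2 = v.ofLp ⬝ᵥ v.ofLp := by
  rw [EuclideanSpace.real_norm_sq_eq]
  simp [dotProduct, sq]

namespace HType

variable {J : Fin k → Matrix (Fin m) (Fin m) ℝ}

lemma mulVec_dotProduct_mulVec (hJ : HType J) (ℓ ℓ' : Fin k) (z : Fin m → ℝ) :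
    (J ℓ *ᵥ z) ⬝ᵥ (J ℓ' *ᵥ z) = if ℓ = ℓ' then z ⬝ᵥ z else 0 := by
  -- `(J z)·(J' z)` is symmetric and equals `-z·(J J' z)`, so twice it is `-z·((J J' + J' J) z)`.
  have h := congrArg (fun M => z ⬝ᵥ (M *ᵥ z)) (hJ.2 ℓ ℓ')
  simp only [add_mulVec, dotProduct_add, smul_mulVec, one_mulVec, dotProduct_smul,
    smul_eq_mul] at h
  rw [← neg_neg (z ⬝ᵥ _), ← mulVec_dotProduct_mulVec_of_transpose_eq_neg (hJ.1 ℓ),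
    ← neg_neg (z ⬝ᵥ ((J ℓ' * J ℓ) *ᵥ z)),
    ← mulVec_dotProduct_mulVec_of_transpose_eq_neg (hJ.1 ℓ'),
    dotProduct_comm (J ℓ' *ᵥ z)] at h
  split_ifs at h ⊢ <;> linarith

end HType

section HorizontalCalculus

variable (J : Fin k → Matrix (Fin m) (Fin m) ℝ)

def horizontalVec (i : Fin m) (x : Pt m k) : Pt m k :=
  (EuclideanSpace.single i 1,
    ∑ ℓ, ((1 / 2) * ∑ j, J ℓ i j * x.1 j) • EuclideanSpace.single ℓ 1)

lemma XD_eq_fderiv_apply (f : Pt m k → ℝ) (i : Fin m) (x : Pt m k) :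
    XD J f i x = fderiv ℝ f x (horizontalVec J i x) := by
  have hvec : horizontalVec J i x = (EuclideanSpace.single i 1, 0) +
      ∑ ℓ, ((1 / 2) * ∑ j, J ℓ i j * x.1 j) • ((0 : EuclideanSpace ℝ (Fin m)),
        EuclideanSpace.single ℓ (1 : ℝ)) := by
    ext <;> simp [horizontalVec, Prod.fst_sum, Prod.snd_sum]
  rw [hvec, map_add, map_sum, XD, Finset.mul_sum]
  simp only [map_smul, smul_eq_mul]
  congr 1
  exact Finset.sum_congr rfl fun ℓ _ => by ring

variable {J} {f g : Pt m k → ℝ} {i : Fin m} {x : Pt m k}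

lemma XD_eq_of_hasFDerivAt {f' : Pt m k →L[ℝ] ℝ} (hf : HasFDerivAt f f' x) :
    XD J f i x = f' (horizontalVec J i x) := by
  rw [XD_eq_fderiv_apply, hf.fderiv]

lemma XD_congr_of_eventuallyEq (h : f =ᶠ[nhds x] g) : XD J f i x = XD J g i x := by
  rw [XD_eq_fderiv_apply, XD_eq_fderiv_apply, h.fderiv_eq]

lemma XD_add (hf : DifferentiableAt ℝ f x) (hg : DifferentiableAt ℝ g x) :
    XD J (fun y => f y + g y) i x = XD J f i x + XD J g i x := by
  simp [XD_eq_fderiv_apply, fderiv_fun_add hf hg]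

lemma XD_mul (hf : DifferentiableAt ℝ f x) (hg : DifferentiableAt ℝ g x) :
    XD J (fun y => f y * g y) i x = f x * XD J g i x + g x * XD J f i x := by
  simp [XD_eq_fderiv_apply, fderiv_fun_mul hf hg]

lemma XD_const_mul (c : ℝ) (hf : DifferentiableAt ℝ f x) :
    XD J (fun y => c * f y) i x = c * XD J f i x := by
  simp [XD_eq_fderiv_apply, fderiv_const_mul hf]

lemma XD_sum {ι : Type*} (s : Finset ι) {F : ι → Pt m k → ℝ}
    (hF : ∀ a ∈ s, DifferentiableAt ℝ (F a) x) :
    XD J (fun y => ∑ a ∈ s, F a y) i x = ∑ a ∈ s, XD J (F a) i x := by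
  simp [XD_eq_fderiv_apply, fderiv_fun_sum hF]

lemma XD_rpow_const (r : ℝ) (hf : DifferentiableAt ℝ f x) (hx : f x ≠ 0) :
    XD J (fun y => f y ^ r) i x = r * f x ^ (r - 1) * XD J f i x := by
  rw [XD_eq_of_hasFDerivAt (hf.hasFDerivAt.rpow_const (Or.inl hx)), XD_eq_fderiv_apply]
  simp

lemma XD_fst_apply (j : Fin m) : XD J (fun y => y.1 j) i x = if j = i then 1 else 0 := by
  refine (XD_eq_of_hasFDerivAt ((PiLp.hasFDerivAt_apply 2 x.1 j).comp x hasFDerivAt_fst)).trans ?_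
  simp [horizontalVec]

lemma XD_snd_apply (ℓ : Fin k) :
    XD J (fun y => y.2 ℓ) i x = (1 / 2) * ∑ j, J ℓ i j * x.1 j := by
  refine (XD_eq_of_hasFDerivAt ((PiLp.hasFDerivAt_apply 2 x.2 ℓ).comp x hasFDerivAt_snd)).trans ?_
  simp [horizontalVec]

end HorizontalCalculus

section Gauge

def gaugeQuartic (x : Pt m k) : ℝ := ‖x.1‖ ^ 4 + 16 * ‖x.2‖ ^ 2

def zNormSq (x : Pt m k) : ℝ := ‖x.1‖ ^ 2

def twist (J : Fin k → Matrix (Fin m) (Fin m) ℝ) (i : Fin m) (x : Pt m k) : ℝ :=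
  ∑ ℓ, x.2 ℓ * ∑ j, J ℓ i j * x.1 j

lemma gaugeN_eq_rpow (x : Pt m k) : gaugeN x = gaugeQuartic x ^ (1 / 4 : ℝ) := rfl

lemma gaugeQuartic_eq (x : Pt m k) :
    gaugeQuartic x = zNormSq x * zNormSq x + 16 * ‖x.2‖ ^ 2 := by
  rw [gaugeQuartic, zNormSq]; ring

lemma gaugeQuartic_nonneg (x : Pt m k) : 0 ≤ gaugeQuartic x := by
  unfold gaugeQuartic; positivity

lemma zNormSq_pos {x : Pt m k} (hx : x.1 ≠ 0) : 0 < zNormSq x := by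
  unfold zNormSq; positivity

lemma gaugeQuartic_pos {x : Pt m k} (hx : x.1 ≠ 0) : 0 < gaugeQuartic x := by
  have := zNormSq_pos hx
  rw [gaugeQuartic_eq]; positivity

lemma twist_eq_sum_smul_mulVec (J : Fin k → Matrix (Fin m) (Fin m) ℝ) (i : Fin m) (x : Pt m k) :
    twist J i x = (∑ ℓ, x.2 ℓ • (J ℓ *ᵥ x.1.ofLp)) i := by
  simp [twist, Finset.sum_apply, mulVec, dotProduct]

@[fun_prop]
lemma differentiable_zNormSq : Differentiable ℝ (zNormSq : Pt m k → ℝ) :=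
  fun _ => differentiableAt_fst.norm_sq ℝ

@[fun_prop]
lemma differentiable_twist (J : Fin k → Matrix (Fin m) (Fin m) ℝ) (i : Fin m) :
    Differentiable ℝ (twist J i) := by
  unfold twist; fun_prop

@[fun_prop]
lemma differentiable_gaugeQuartic : Differentiable ℝ (gaugeQuartic : Pt m k → ℝ) := by
  have hσ : Differentiable ℝ (fun x : Pt m k => ‖x.2‖ ^ 2) :=
    fun _ => differentiableAt_snd.norm_sq ℝ
  rw [funext gaugeQuartic_eq]; fun_prop

variable {J : Fin k → Matrix (Fin m) (Fin m) ℝ} {i : Fin m} {x : Pt m k}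

lemma XD_zNormSq : XD J zNormSq i x = 2 * x.1 i := by
  refine (XD_eq_of_hasFDerivAt (f := zNormSq) hasFDerivAt_fst.norm_sq).trans ?_
  simp [horizontalVec, EuclideanSpace.inner_single_right]

lemma XD_norm_snd_sq : XD J (fun y => ‖y.2‖ ^ 2) i x = twist J i x := by
  rw [XD_eq_of_hasFDerivAt (hasFDerivAt_snd.norm_sq)]
  simp only [horizontalVec, twist, _root_.smul_apply, ContinuousLinearMap.comp_apply,
    ContinuousLinearMap.coe_snd', map_sum, map_smul, coe_innerSL_apply,
    EuclideanSpace.inner_single_right, Real.ringHom_apply, one_mul, smul_eq_mul, nsmul_eq_mul,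
    Nat.cast_ofNat]
  rw [Finset.mul_sum]
  exact Finset.sum_congr rfl fun ℓ _ => by ring

lemma XD_gaugeQuartic : XD J gaugeQuartic i x = 4 * zNormSq x * x.1 i + 16 * twist J i x := by
  have hσ : DifferentiableAt ℝ (fun y : Pt m k => ‖y.2‖ ^ 2) x :=
    differentiableAt_snd.norm_sq ℝ
  rw [funext gaugeQuartic_eq, XD_add (by fun_prop) (hσ.const_mul 16),
    XD_mul (by fun_prop) (by fun_prop), XD_const_mul _ hσ, XD_zNormSq, XD_norm_snd_sq]
  ring

lemma XD_twist_self (hskew : ∀ ℓ, (J ℓ)ᵀ = -J ℓ) :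
    XD J (twist J i) i x = (1 / 2) * ∑ ℓ, (∑ j, J ℓ i j * x.1 j) ^ 2 := by
  have hdiag : ∀ ℓ, J ℓ i i = 0 := fun ℓ => by
    have := congrFun (congrFun (hskew ℓ) i) i
    simp only [transpose_apply, Matrix.neg_apply] at this
    linarith
  have hrow : ∀ ℓ, XD J (fun y => ∑ j, J ℓ i j * y.1 j) i x = 0 := fun ℓ =>
    calc _ = ∑ j, J ℓ i j * XD J (fun y => y.1 j) i x :=
          (XD_sum _ fun j _ => by fun_prop).trans
            (Finset.sum_congr rfl fun j _ => XD_const_mul _ (by fun_prop))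
      _ = J ℓ i i := by simp [XD_fst_apply]
      _ = 0 := hdiag ℓ
  unfold twist
  rw [XD_sum _ (fun ℓ _ => by fun_prop), Finset.mul_sum]
  refine Finset.sum_congr rfl fun ℓ _ => ?_
  rw [XD_mul (by fun_prop) (by fun_prop), hrow, XD_snd_apply]
  ring

@[fun_prop]
lemma differentiable_XD_gaugeQuartic (J : Fin k → Matrix (Fin m) (Fin m) ℝ) (i : Fin m) :
    Differentiable ℝ (XD J gaugeQuartic i) := by
  rw [funext fun y => XD_gaugeQuartic (J := J) (i := i) (x := y)]
  fun_prop

end Gauge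

section GaugeIdentities

variable {J : Fin k → Matrix (Fin m) (Fin m) ℝ} (x : Pt m k)

lemma sum_mul_twist (hskew : ∀ ℓ, (J ℓ)ᵀ = -J ℓ) : ∑ i, x.1 i * twist J i x = 0 := by
  simp_rw [twist_eq_sum_smul_mulVec]
  change x.1.ofLp ⬝ᵥ (∑ ℓ, x.2 ℓ • (J ℓ *ᵥ x.1.ofLp)) = 0
  simp [dotProduct_sum, dotProduct_smul, dotProduct_mulVec_self_of_transpose_eq_neg (hskew _)]

lemma sum_twist_sq (hJ : HType J) : ∑ i, twist J i x ^ 2 = ‖x.2‖ ^ 2 * ‖x.1‖ ^ 2 := by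
  simp_rw [twist_eq_sum_smul_mulVec, sq]
  change (∑ ℓ, x.2 ℓ • (J ℓ *ᵥ x.1.ofLp)) ⬝ᵥ
    (∑ ℓ, x.2 ℓ • (J ℓ *ᵥ x.1.ofLp)) = _
  simp only [dotProduct_sum, dotProduct_smul, sum_dotProduct, smul_dotProduct,
    HType.mulVec_dotProduct_mulVec hJ, smul_eq_mul, mul_ite, mul_zero, Finset.sum_ite_eq',
    Finset.mem_univ, if_true, ← sq, EuclideanSpace.norm_sq_eq_dotProduct]
  simp [dotProduct, Finset.sum_mul, mul_assoc]

lemma sum_sum_mulVec_sq (hJ : HType J) :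
    ∑ i, ∑ ℓ, (∑ j, J ℓ i j * x.1 j) ^ 2 = k * ‖x.1‖ ^ 2 := by
  rw [Finset.sum_comm]
  have h : ∀ ℓ, ∑ i, (∑ j, J ℓ i j * x.1 j) ^ 2 = ‖x.1‖ ^ 2 := fun ℓ => by
    rw [EuclideanSpace.norm_sq_eq_dotProduct]
    simpa [dotProduct, mulVec, sq]
      using HType.mulVec_dotProduct_mulVec hJ ℓ ℓ x.1.ofLp
  simp [h]

lemma sum_XD_gaugeQuartic_sq (hJ : HType J) :
    ∑ i, XD J gaugeQuartic i x ^ 2 = 16 * zNormSq x * gaugeQuartic x := by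
  have h : ∀ i, XD J gaugeQuartic i x ^ 2 = 16 * zNormSq x ^ 2 * x.1 i ^ 2
      + 128 * zNormSq x * (x.1 i * twist J i x) + 256 * twist J i x ^ 2 := fun i => by
    rw [XD_gaugeQuartic]; ring
  simp only [h, Finset.sum_add_distrib, ← Finset.mul_sum, sum_mul_twist x hJ.1, sum_twist_sq x hJ,
    ← EuclideanSpace.real_norm_sq_eq, gaugeQuartic_eq]
  rw [zNormSq]
  ring

lemma sum_XD_zNormSq_mul_XD_gaugeQuartic (hskew : ∀ ℓ, (J ℓ)ᵀ = -J ℓ) :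
    ∑ i, XD J zNormSq i x * XD J gaugeQuartic i x = 8 * zNormSq x ^ 2 := by
  have h : ∀ i, XD J zNormSq i x * XD J gaugeQuartic i x = 8 * zNormSq x * x.1 i ^ 2
      + 32 * (x.1 i * twist J i x) := fun i => by
    rw [XD_zNormSq, XD_gaugeQuartic]; ring
  simp only [h, Finset.sum_add_distrib, ← Finset.mul_sum, sum_mul_twist x hskew,
    ← EuclideanSpace.real_norm_sq_eq]
  rw [zNormSq]
  ring

lemma hLap_gaugeQuartic (hJ : HType J) :
    hLap J gaugeQuartic x = 4 * (m + 2 * k + 2) * zNormSq x := by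
  have h : ∀ i, XD J (XD J gaugeQuartic i) i x =
      4 * (zNormSq x + 2 * x.1 i ^ 2) + 8 * ∑ ℓ, (∑ j, J ℓ i j * x.1 j) ^ 2 := fun i => by
    rw [funext fun y => XD_gaugeQuartic (J := J) (i := i) (x := y),
      XD_add (by fun_prop) (by fun_prop), XD_mul (by fun_prop) (by fun_prop),
      XD_const_mul _ (by fun_prop), XD_const_mul _ (by fun_prop), XD_twist_self hJ.1,
      XD_fst_apply, XD_zNormSq]
    simp only [if_true, mul_one]
    ring
  simp only [hLap, h, Finset.sum_add_distrib, ← Finset.mul_sum, sum_sum_mulVec_sq x hJ,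
    ← EuclideanSpace.real_norm_sq_eq]
  simp only [zNormSq, Finset.sum_const, Finset.card_univ, Fintype.card_fin, nsmul_eq_mul]
  ring

end GaugeIdentities

section PowerOfGauge

variable {J : Fin k → Matrix (Fin m) (Fin m) ℝ} {i : Fin m} {x : Pt m k} (c β : ℝ)

lemma XD_const_mul_gaugeQuartic_rpow (hx : x.1 ≠ 0) :
    XD J (fun y => c * gaugeQuartic y ^ β) i x =
      c * β * gaugeQuartic x ^ (β - 1) * XD J gaugeQuartic i x := by
  have hu := (gaugeQuartic_pos hx).ne'
  rw [XD_const_mul _ ((differentiable_gaugeQuartic x).rpow_const (Or.inl hu)),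
    XD_rpow_const _ (differentiable_gaugeQuartic x) hu]
  ring

lemma hGradSq_const_mul_gaugeQuartic_rpow (hJ : HType J) (hx : x.1 ≠ 0) :
    hGradSq J (fun y => c * gaugeQuartic y ^ β) x =
      16 * (c * β) ^ 2 * zNormSq x * gaugeQuartic x ^ (2 * β - 1) := by
  have hu := gaugeQuartic_pos hx
  have hpow : (gaugeQuartic x ^ (β - 1)) ^ 2 * gaugeQuartic x = gaugeQuartic x ^ (2 * β - 1) := by
    rw [sq, ← Real.rpow_add hu, ← Real.rpow_add_one hu.ne']
    ring_nf
  simp only [hGradSq, XD_const_mul_gaugeQuartic_rpow c β hx, mul_pow, ← Finset.mul_sum,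
    sum_XD_gaugeQuartic_sq _ hJ, ← hpow]
  ring

lemma hGradSq_rpow_mul_XD_const_mul_gaugeQuartic_rpow (hJ : HType J) (hx : x.1 ≠ 0) (p : ℝ) :
    hGradSq J (fun y => c * gaugeQuartic y ^ β) x ^ ((p - 2) / 2) *
        XD J (fun y => c * gaugeQuartic y ^ β) i x =
      c * β * (16 * (c * β) ^ 2) ^ ((p - 2) / 2) * (zNormSq x ^ ((p - 2) / 2) *
        (gaugeQuartic x ^ (β * (p - 1) - p / 2) * XD J gaugeQuartic i x)) := by
  have hu := gaugeQuartic_pos hx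
  have hpow : gaugeQuartic x ^ (β * (p - 1) - p / 2) =
      (gaugeQuartic x ^ (2 * β - 1)) ^ ((p - 2) / 2) * gaugeQuartic x ^ (β - 1) := by
    rw [← Real.rpow_mul hu.le, ← Real.rpow_add hu]
    ring_nf
  rw [hGradSq_const_mul_gaugeQuartic_rpow c β hJ hx, XD_const_mul_gaugeQuartic_rpow c β hx,
    Real.mul_rpow (mul_nonneg (by positivity) (zNormSq_pos hx).le) (Real.rpow_nonneg hu.le _),
    Real.mul_rpow (by positivity) (zNormSq_pos hx).le, hpow]
  ring

lemma sum_XD_zNormSq_rpow_mul_gaugeQuartic_rpow_mul_XD (hJ : HType J) (hx : x.1 ≠ 0)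
    (q e : ℝ) :
    ∑ i, XD J (fun y => zNormSq y ^ q * (gaugeQuartic y ^ e * XD J gaugeQuartic i y)) i x =
      (8 * q + 16 * e + 4 * (m + 2 * k + 2)) * zNormSq x ^ (q + 1) * gaugeQuartic x ^ e := by
  have hw := (zNormSq_pos hx).ne'
  have hu := (gaugeQuartic_pos hx).ne'
  have hterm : ∀ i, XD J (fun y => zNormSq y ^ q * (gaugeQuartic y ^ e * XD J gaugeQuartic i y))
      i x = zNormSq x ^ q * gaugeQuartic x ^ e * XD J (XD J gaugeQuartic i) i x +
        e * zNormSq x ^ q * gaugeQuartic x ^ (e - 1) * XD J gaugeQuartic i x ^ 2 +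
        q * zNormSq x ^ (q - 1) * gaugeQuartic x ^ e *
          (XD J zNormSq i x * XD J gaugeQuartic i x) := fun i => by
    rw [XD_mul (by fun_prop (disch := assumption)) (by fun_prop (disch := assumption)),
      XD_mul (by fun_prop (disch := assumption)) (by fun_prop),
      XD_rpow_const _ (by fun_prop) hu, XD_rpow_const _ (by fun_prop) hw]
    ring
  have hLap_eq := hLap_gaugeQuartic x hJ
  rw [hLap] at hLap_eq
  simp only [hterm, Finset.sum_add_distrib, ← Finset.mul_sum]
  rw [hLap_eq, sum_XD_gaugeQuartic_sq _ hJ, sum_XD_zNormSq_mul_XD_gaugeQuartic _ hJ.1,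
    Real.rpow_add_one hw]
  have hwq' : zNormSq x ^ q = zNormSq x ^ (q - 1) * zNormSq x := by
    rw [← Real.rpow_add_one hw]; ring_nf
  have hue' : gaugeQuartic x ^ e = gaugeQuartic x ^ (e - 1) * gaugeQuartic x := by
    rw [← Real.rpow_add_one hu]; ring_nf
  rw [hwq', hue']
  ring

lemma hPLap_const_mul_gaugeQuartic_rpow (hJ : HType J) (hx : x.1 ≠ 0) (p : ℝ) :
    hPLap J p (fun y => c * gaugeQuartic y ^ β) x =
      4 * (c * β) * (16 * (c * β) ^ 2) ^ ((p - 2) / 2) * (4 * β * (p - 1) + m + 2 * k - p) *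
        zNormSq x ^ (p / 2) * gaugeQuartic x ^ (β * (p - 1) - p / 2) := by
  have hflux : ∀ i, XD J (fun y => hGradSq J (fun y => c * gaugeQuartic y ^ β) y ^ ((p - 2) / 2) *
      XD J (fun y => c * gaugeQuartic y ^ β) i y) i x =
      c * β * (16 * (c * β) ^ 2) ^ ((p - 2) / 2) * XD J (fun y => zNormSq y ^ ((p - 2) / 2) *
        (gaugeQuartic y ^ (β * (p - 1) - p / 2) * XD J gaugeQuartic i y)) i x := fun i => by
    have hw := (zNormSq_pos hx).ne'
    have hu := (gaugeQuartic_pos hx).ne'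
    rw [← XD_const_mul _ (by fun_prop (disch := assumption))]
    refine XD_congr_of_eventuallyEq ?_
    filter_upwards [(isOpen_ne_fun continuous_fst continuous_const).mem_nhds hx] with y hy
    exact hGradSq_rpow_mul_XD_const_mul_gaugeQuartic_rpow c β hJ hy p
  rw [hPLap]
  simp only [hflux, ← Finset.mul_sum]
  rw [sum_XD_zNormSq_rpow_mul_gaugeQuartic_rpow_mul_XD hJ hx, show (p - 2) / 2 + 1 = p / 2 by ring]
  ring

end PowerOfGauge

-- Also at `N = 0`, where Lean's `R / 0 = 0` and `0 ^ a` conventions make both sides agree.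
lemma rpow_div_gaugeN_eq {R : ℝ} (hR : 0 ≤ R) (α : ℝ) (x : Pt m k) :
    (R / gaugeN x) ^ α = R ^ α * gaugeQuartic x ^ (-α / 4) := by
  have hu := gaugeQuartic_nonneg x
  rw [gaugeN_eq_rpow, Real.div_rpow hR (Real.rpow_nonneg hu _), ← Real.rpow_mul hu,
    div_eq_mul_inv, ← Real.rpow_neg hu]
  ring_nf

theorem capacitary_potential_gauge_ball_general
    (J : Fin k → Matrix (Fin m) (Fin m) ℝ) (hJ : HType J)
    (p R : ℝ) (hp : 1 < p) (hR : 0 < R)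
    (f : Pt m k → ℝ)
    (hf : ∀ x : Pt m k,
      f x = (R / gaugeN x) ^ (((m : ℝ) + 2 * k - p) / (p - 1))) :
    (∀ x : Pt m k, x.1 ≠ 0 → hPLap J p f x = 0) ∧
    (∀ x : Pt m k, gaugeN x = R → f x = 1) := by
  set α := ((m : ℝ) + 2 * k - p) / (p - 1)
  have hf_eq : f = fun y => R ^ α * gaugeQuartic y ^ (-α / 4) :=
    funext fun y => (hf y).trans (rpow_div_gaugeN_eq hR.le α y)
  have hcritical : 4 * (-α / 4) * (p - 1) + m + 2 * k - p = 0 := by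
    have hα : α * (p - 1) = m + 2 * k - p := div_mul_cancel₀ _ (sub_pos.2 hp).ne'
    linear_combination -hα
  refine ⟨fun x hx => ?_, fun x hx => ?_⟩
  · rw [hf_eq, hPLap_const_mul_gaugeQuartic_rpow _ _ hJ hx, hcritical]
    simp
  · rw [hf x, hx, div_self hR.ne', Real.one_rpow]

/-- for 1 < p < Q = m+2k and R > 0, the function
f = (R/N)^{(Q−p)/(p−1)} is Δ_{H,p}-harmonic away from {z = 0} and equals 1 on {N = R}. -/
theorem capacitary_potential_gauge_ball
    (hm : 1 ≤ m) (hk : 1 ≤ k)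
    (J : Fin k → Matrix (Fin m) (Fin m) ℝ) (hJ : HType J)
    (p R : ℝ) (hp : 1 < p) (hpQ : p < (m : ℝ) + 2 * k) (hR : 0 < R)
    (f : Pt m k → ℝ)
    (hf : ∀ x : Pt m k,
      f x = (R / gaugeN x) ^ (((m : ℝ) + 2 * k - p) / (p - 1))) :
    (∀ x : Pt m k, x.1 ≠ 0 → hPLap J p f x = 0) ∧
    (∀ x : Pt m k, gaugeN x = R → f x = 1) :=
  capacitary_potential_gauge_ball_general J hJ p R hp hR f hf

end
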